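/- Hölder norm of the first-order Taylor remainder along Hölder paths (Lemma D.1): let 0 < β < 1 and n, m ≥ 1. Let f : ℝ^m → ℝ be twice continuously differentiable with ‖f‖_{C^{2+β}(ℝ^m)} < ∞, and let A, B : Q → ℝ^m be continuously differentiable on Q := [0,1]^n with finite C¹ norms ‖A‖_{C¹}, ‖B‖_{C¹} (sup of the norms of the values and of the derivatives). Define g : Q → ℝ by g(x) := f(A(x) + B(x)) − f(A(x)) − ⟨∇f(A(x)), B(x)⟩. Then there exists a constant C > 0 depending only on n and β such that ‖g‖_{C^β(Q)} ≤ C · ‖f‖_{C^{2+β}(ℝ^m)} · max(1, ‖A‖_{C¹}^β) · ‖B‖_{C¹}². -/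

import Mathlib

/-!
Write the function as `x ↦ R(A x, B x)` with `R(u, p) = f(u + p) - f u - Df(u) p`. Taylor's
formula along the segment `s ↦ u + s p` gives `|R(u, p)| ≤ ‖D²f‖ ‖p‖²`. For the Hölder quotient,
compare `R(u, p)` and `R(v, q)` where `‖u - v‖ ≤ a t`, `‖p - q‖ ≤ b t`, `‖p‖, ‖q‖ ≤ b` and
`t = ‖x - y‖`, with `a, b` the `C¹` norms of `A, B`. If `b ≤ 1`, Taylor's formula for
`s ↦ f(u + s p) - f(v + s q)` bounds the difference through the `β`-Hölder continuity of `D²f`.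
If `b > 1`, the three terms of `R` are estimated separately by the `β`-Hölder continuity of `f` and
`Df` (a consequence of their boundedness and Lipschitz continuity), and `b²` absorbs the extra
powers of `b`. Finally `t ≤ √n · t^β` on the cube, since its diameter is `√n ≥ 1`.
-/

open MeasureTheory Real
open scoped ENNReal NNReal RealInnerProductSpace

noncomputable section

abbrev Ed (d : ℕ) : Type := EuclideanSpace ℝ (Fin d)

/-- The closed unit cube `Q = [0,1]^n`. -/
def unitCube (n : ℕ) : Set (Ed n) := {x | ∀ i, x i ∈ Set.Icc (0 : ℝ) 1}

def supDerivOn {d : ℕ} (j : ℕ) (Ω : Set (Ed d)) (f : Ed d → ℝ) : ℝ≥0∞ :=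
  ⨆ x ∈ Ω, (‖iteratedFDerivWithin ℝ j f Ω x‖₊ : ℝ≥0∞)

def holderSemiOn {d : ℕ} (k : ℕ) (ε : ℝ) (Ω : Set (Ed d)) (f : Ed d → ℝ) : ℝ≥0∞ :=
  ⨆ (x ∈ Ω) (y ∈ Ω) (_ : x ≠ y),
    (‖iteratedFDerivWithin ℝ k f Ω x - iteratedFDerivWithin ℝ k f Ω y‖₊ : ℝ≥0∞) /
      (‖x - y‖₊ : ℝ≥0∞) ^ ε

/-- The Hölder norm `‖f‖_{C^α(Ω)}`, valued in `ℝ≥0∞`. -/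
def holderNormOn {d : ℕ} (α : ℝ) (Ω : Set (Ed d)) (f : Ed d → ℝ) : ℝ≥0∞ :=
  (∑ j ∈ Finset.range (⌊α⌋₊ + 1), supDerivOn j Ω f) +
  (if α = (⌊α⌋₊ : ℝ) then 0 else holderSemiOn ⌊α⌋₊ (α - ⌊α⌋₊) Ω f)

/-- The Hölder norm over all of `ℝ^d`. -/
def holderNorm {d : ℕ} (α : ℝ) (f : Ed d → ℝ) : ℝ≥0∞ :=
  holderNormOn α Set.univ f

/-- The `C¹(Ω)` norm of a vector-valued map: sup of values plus sup of derivatives. -/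
def c1NormOn {n m : ℕ} (Ω : Set (Ed n)) (A : Ed n → Ed m) : ℝ≥0∞ :=
  (⨆ x ∈ Ω, (‖A x‖₊ : ℝ≥0∞)) + ⨆ x ∈ Ω, (‖fderivWithin ℝ A Ω x‖₊ : ℝ≥0∞)


lemma norm_sub_le_two_mul_rpow_of_lipschitz_of_bounded {E G : Type*} [NormedAddCommGroup E]
    [NormedAddCommGroup G] {φ : E → G} {K β : ℝ}
    (hβ0 : 0 ≤ β) (hβ1 : β ≤ 1)
    (hlip : ∀ u v, ‖φ u - φ v‖ ≤ K * ‖u - v‖) (hbdd : ∀ u, ‖φ u‖ ≤ K) (u v : E) :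
    ‖φ u - φ v‖ ≤ 2 * K * ‖u - v‖ ^ β := by
  have hK : 0 ≤ K := (norm_nonneg _).trans (hbdd u)
  rcases le_total ‖u - v‖ 1 with h | h
  · calc ‖φ u - φ v‖ ≤ K * ‖u - v‖ := hlip u v
      _ ≤ K * ‖u - v‖ ^ β := by gcongr; exact Real.self_le_rpow_of_le_one (norm_nonneg _) h hβ1
      _ ≤ 2 * K * ‖u - v‖ ^ β := by
        have := Real.rpow_nonneg (norm_nonneg (u - v)) β
        nlinarith
  · calc ‖φ u - φ v‖ ≤ ‖φ u‖ + ‖φ v‖ := norm_sub_le _ _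
      _ ≤ 2 * K * 1 := by linarith [hbdd u, hbdd v]
      _ ≤ 2 * K * ‖u - v‖ ^ β := by gcongr; exact Real.one_le_rpow h hβ0

lemma le_mul_rpow_of_le {t T β : ℝ} (ht : 0 ≤ t) (htT : t ≤ T) (hT : 1 ≤ T) (hβ0 : 0 ≤ β)
    (hβ1 : β ≤ 1) : t ≤ T * t ^ β := by
  rcases le_total t 1 with h | h
  · calc t ≤ t ^ β := Real.self_le_rpow_of_le_one ht h hβ1
      _ ≤ T * t ^ β := le_mul_of_one_le_left (Real.rpow_nonneg ht β) hT
  · calc t ≤ T := htT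
      _ ≤ T * t ^ β := le_mul_of_one_le_right (by linarith) (Real.one_le_rpow h hβ0)

lemma rpow_add_le_of_le_mul {x y a b t β : ℝ} (hx : 0 ≤ x) (hy : 0 ≤ y) (ha : 0 ≤ a) (hb : 0 ≤ b)
    (ht : 0 ≤ t) (hxa : x ≤ a * t) (hyb : y ≤ b * t) (hβ0 : 0 ≤ β) (hβ1 : β ≤ 1) :
    (x + y) ^ β ≤ (a ^ β + b ^ β) * t ^ β :=
  calc (x + y) ^ β ≤ ((a + b) * t) ^ β := Real.rpow_le_rpow (by positivity) (by linarith) hβ0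
    _ ≤ (a ^ β + b ^ β) * t ^ β := by
      rw [Real.mul_rpow (by positivity) ht]
      gcongr
      exact Real.rpow_add_le_add_rpow ha hb hβ0 hβ1

section Calculus

variable {E G : Type*} [NormedAddCommGroup E] [NormedSpace ℝ E]
  [NormedAddCommGroup G] [NormedSpace ℝ G]

lemma norm_apply_apply_sub_apply_apply_le (L₁ L₂ : E →L[ℝ] E →L[ℝ] G) (p q : E) :
    ‖L₁ p p - L₂ q q‖ ≤ ‖L₁ - L₂‖ * ‖p‖ ^ 2 + ‖L₂‖ * (‖p‖ + ‖q‖) * ‖p - q‖ := by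
  have hsplit : L₁ p p - L₂ q q = (L₁ - L₂) p p + (L₂ (p - q) p + L₂ q (p - q)) := by
    simp only [sub_apply, map_sub]
    abel
  rw [hsplit]
  refine (norm_add_le _ _).trans (add_le_add ?_ ((norm_add_le _ _).trans ?_))
  · simpa [sq, mul_assoc] using (L₁ - L₂).le_opNorm₂ p p
  · have h1 := L₂.le_opNorm₂ (p - q) p
    have h2 := L₂.le_opNorm₂ q (p - q)
    nlinarith [norm_nonneg L₂, norm_nonneg (p - q)]

lemma norm_sub_sub_deriv_le_of_norm_deriv₂_le {h h' h'' : ℝ → G} {C : ℝ}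
    (hh : ∀ s, HasDerivAt h (h' s) s) (hh' : ∀ s, HasDerivAt h' (h'' s) s)
    (bound : ∀ s ∈ Set.Icc (0 : ℝ) 1, ‖h'' s‖ ≤ C) :
    ‖h 1 - h 0 - h' 0‖ ≤ C := by
  have hC : 0 ≤ C := (norm_nonneg _).trans (bound 0 (by simp))
  have hderiv_sub : ∀ s ∈ Set.Icc (0 : ℝ) 1, ‖h' s - h' 0‖ ≤ C := fun s hs =>
    calc ‖h' s - h' 0‖ ≤ C * (s - 0) :=
          norm_image_sub_le_of_norm_deriv_le_segment' (fun s _ => (hh' s).hasDerivWithinAt)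
            (fun s hs => bound s (Set.Ico_subset_Icc_self hs)) s hs
      _ ≤ C := by nlinarith [hs.2]
  have key := norm_image_sub_le_of_norm_deriv_le_segment' (f := fun s => h s - s • h' 0)
    (fun s _ => ((hh s).sub ((hasDerivAt_id s).smul_const (h' 0))).hasDerivWithinAt)
    (fun s hs => by simpa using hderiv_sub s (Set.Ico_subset_Icc_self hs)) 1 (by simp)
  simpa [sub_sub, add_comm] using key

lemma norm_fderiv_fderiv_sub_eq (f : E → G) (x y : E) :
    ‖fderiv ℝ (fderiv ℝ f) x - fderiv ℝ (fderiv ℝ f) y‖ =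
      ‖iteratedFDeriv ℝ 2 f x - iteratedFDeriv ℝ 2 f y‖ := by
  have hcurry : ∀ z, iteratedFDeriv ℝ 2 f z =
      (continuousMultilinearCurryRightEquiv' ℝ 1 E G).symm
        ((continuousMultilinearCurryFin1 ℝ E (E →L[ℝ] G)).symm (fderiv ℝ (fderiv ℝ f) z)) := by
    intro z; ext m; simp [iteratedFDeriv_two_apply, Fin.init]
  rw [hcurry, hcurry, ← LinearIsometryEquiv.map_sub, ← LinearIsometryEquiv.map_sub,
    LinearIsometryEquiv.norm_map, LinearIsometryEquiv.norm_map]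

lemma hasDerivAt_comp_add_smul {g : E → G} (hg : Differentiable ℝ g) (u p : E) (s : ℝ) :
    HasDerivAt (fun t : ℝ => g (u + t • p)) (fderiv ℝ g (u + s • p) p) s := by
  have hline : HasDerivAt (fun t : ℝ => u + t • p) p s := by
    simpa using ((hasDerivAt_id s).smul_const p).const_add u
  exact (hg _).hasFDerivAt.comp_hasDerivAt s hline

lemma hasDerivAt_fderiv_comp_add_smul_apply {f : E → G} (hf : ContDiff ℝ 2 f) (u p : E) (s : ℝ) :
    HasDerivAt (fun t : ℝ => fderiv ℝ f (u + t • p) p)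
      (fderiv ℝ (fderiv ℝ f) (u + s • p) p p) s := by
  have hdf : Differentiable ℝ (fderiv ℝ f) :=
    (hf.fderiv_right (m := 1) le_rfl).differentiable one_ne_zero
  simpa using (hasDerivAt_comp_add_smul hdf u p s).clm_apply (hasDerivAt_const s p)

def firstOrderRemainder (f : E → G) (u p : E) : G :=
  f (u + p) - f u - fderiv ℝ f u p

variable {f : E → G} {β K : ℝ}

lemma norm_firstOrderRemainder_le (hf : ContDiff ℝ 2 f)
    (hK : ∀ x, ‖fderiv ℝ (fderiv ℝ f) x‖ ≤ K) (u p : E) :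
    ‖firstOrderRemainder f u p‖ ≤ K * ‖p‖ ^ 2 := by
  have hdf : Differentiable ℝ f := hf.differentiable two_ne_zero
  have key := norm_sub_sub_deriv_le_of_norm_deriv₂_le (hasDerivAt_comp_add_smul hdf u p)
    (hasDerivAt_fderiv_comp_add_smul_apply hf u p) (C := K * ‖p‖ ^ 2) fun s _ =>
      ((fderiv ℝ (fderiv ℝ f) (u + s • p)).le_opNorm₂ p p).trans <| by
        rw [mul_assoc, ← sq]; gcongr; exact hK _
  simpa [firstOrderRemainder] using key

lemma norm_firstOrderRemainder_sub_le_of_holder_fderiv_fderiv (hf : ContDiff ℝ 2 f)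
    (hβ : 0 ≤ β) (hK : ∀ x, ‖fderiv ℝ (fderiv ℝ f) x‖ ≤ K)
    (hHolder : ∀ x y, ‖fderiv ℝ (fderiv ℝ f) x - fderiv ℝ (fderiv ℝ f) y‖ ≤ K * ‖x - y‖ ^ β)
    {u v p q : E} {b : ℝ} (hp : ‖p‖ ≤ b) (hq : ‖q‖ ≤ b) :
    ‖firstOrderRemainder f u p - firstOrderRemainder f v q‖ ≤
      K * b ^ 2 * (‖u - v‖ + ‖p - q‖) ^ β + 2 * K * b * ‖p - q‖ := by
  have hdf : Differentiable ℝ f := hf.differentiable two_ne_zero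
  have hK0 : 0 ≤ K := (norm_nonneg (fderiv ℝ (fderiv ℝ f) 0)).trans (hK 0)
  have hdist : ∀ s ∈ Set.Icc (0 : ℝ) 1, ‖(u + s • p) - (v + s • q)‖ ≤ ‖u - v‖ + ‖p - q‖ := by
    intro s hs
    rw [show (u + s • p) - (v + s • q) = (u - v) + s • (p - q) by rw [smul_sub]; abel]
    refine (norm_add_le _ _).trans (add_le_add_right ?_ _)
    rw [norm_smul, Real.norm_of_nonneg hs.1]
    exact mul_le_of_le_one_left (norm_nonneg _) hs.2
  have key := norm_sub_sub_deriv_le_of_norm_deriv₂_le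
    (fun s => (hasDerivAt_comp_add_smul hdf u p s).sub (hasDerivAt_comp_add_smul hdf v q s))
    (fun s => (hasDerivAt_fderiv_comp_add_smul_apply hf u p s).sub
      (hasDerivAt_fderiv_comp_add_smul_apply hf v q s))
    (C := K * b ^ 2 * (‖u - v‖ + ‖p - q‖) ^ β + 2 * K * b * ‖p - q‖) fun s hs => by
      refine (norm_apply_apply_sub_apply_apply_le _ _ p q).trans ?_
      have hsecond := (hHolder (u + s • p) (v + s • q)).trans <| mul_le_mul_of_nonneg_left
        (Real.rpow_le_rpow (norm_nonneg _) (hdist s hs) hβ) hK0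
      have hp2 : ‖p‖ ^ 2 ≤ b ^ 2 := pow_le_pow_left₀ (norm_nonneg p) hp 2
      have hthird : ‖fderiv ℝ (fderiv ℝ f) (v + s • q)‖ * (‖p‖ + ‖q‖) ≤ K * (2 * b) :=
        mul_le_mul (hK _) (by linarith) (by positivity) hK0
      have := Real.rpow_nonneg (add_nonneg (norm_nonneg (u - v)) (norm_nonneg (p - q))) β
      nlinarith [mul_le_mul hsecond hp2 (sq_nonneg _) (by positivity),
        mul_le_mul_of_nonneg_right hthird (norm_nonneg (p - q))]
  convert key using 2
  simp only [firstOrderRemainder, Pi.sub_apply, zero_smul, add_zero, one_smul]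
  abel

lemma norm_firstOrderRemainder_sub_le_of_holder {H : ℝ}
    (hHolder₀ : ∀ x y, ‖f x - f y‖ ≤ H * ‖x - y‖ ^ β)
    (hHolder₁ : ∀ x y, ‖fderiv ℝ f x - fderiv ℝ f y‖ ≤ H * ‖x - y‖ ^ β)
    (hK : ∀ x, ‖fderiv ℝ f x‖ ≤ K) (hβ : 0 ≤ β) (hH : 0 ≤ H)
    {u v p q : E} {b : ℝ} (hp : ‖p‖ ≤ b) :
    ‖firstOrderRemainder f u p - firstOrderRemainder f v q‖ ≤
      H * (‖u - v‖ + ‖p - q‖) ^ β + H * (1 + b) * ‖u - v‖ ^ β + K * ‖p - q‖ := by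
  have hsplit : firstOrderRemainder f u p - firstOrderRemainder f v q =
      (f (u + p) - f (v + q)) - (f u - f v) -
        ((fderiv ℝ f u - fderiv ℝ f v) p + fderiv ℝ f v (p - q)) := by
    simp only [firstOrderRemainder, sub_apply, map_sub]
    abel
  have hshift : ‖(u + p) - (v + q)‖ ^ β ≤ (‖u - v‖ + ‖p - q‖) ^ β :=
    Real.rpow_le_rpow (norm_nonneg _)
      (by rw [add_sub_add_comm]; exact norm_add_le _ _) hβ
  have hlin : ‖(fderiv ℝ f u - fderiv ℝ f v) p‖ ≤ H * ‖u - v‖ ^ β * b :=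
    ((fderiv ℝ f u - fderiv ℝ f v).le_opNorm p).trans
      (mul_le_mul (hHolder₁ u v) hp (norm_nonneg _) (by positivity))
  have hconst : ‖fderiv ℝ f v (p - q)‖ ≤ K * ‖p - q‖ :=
    ((fderiv ℝ f v).le_opNorm _).trans (mul_le_mul_of_nonneg_right (hK v) (norm_nonneg _))
  rw [hsplit]
  refine (norm_sub_le _ _).trans ?_
  refine (add_le_add (norm_sub_le _ _) (norm_add_le _ _)).trans ?_
  nlinarith [hHolder₀ (u + p) (v + q), hHolder₀ u v, mul_le_mul_of_nonneg_left hshift hH]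

structure C2HolderBound (f : E → G) (β K : ℝ) : Prop where
  contDiff : ContDiff ℝ 2 f
  norm_le : ∀ x, ‖f x‖ ≤ K
  norm_fderiv_le : ∀ x, ‖fderiv ℝ f x‖ ≤ K
  norm_fderiv_fderiv_le : ∀ x, ‖fderiv ℝ (fderiv ℝ f) x‖ ≤ K
  norm_fderiv_fderiv_sub_le : ∀ x y,
    ‖fderiv ℝ (fderiv ℝ f) x - fderiv ℝ (fderiv ℝ f) y‖ ≤ K * ‖x - y‖ ^ β

end Calculus

namespace C2HolderBound

variable {E G : Type*} [NormedAddCommGroup E] [NormedSpace ℝ E]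
  [NormedAddCommGroup G] [NormedSpace ℝ G] {f : E → G} {β K : ℝ}

lemma norm_sub_le (hf : C2HolderBound f β K) (x y : E) : ‖f x - f y‖ ≤ K * ‖x - y‖ :=
  convex_univ.norm_image_sub_le_of_norm_fderiv_le
    (fun z _ => (hf.contDiff.differentiable two_ne_zero) z) (fun z _ => hf.norm_fderiv_le z)
    (Set.mem_univ y) (Set.mem_univ x)

lemma norm_fderiv_sub_le (hf : C2HolderBound f β K) (x y : E) :
    ‖fderiv ℝ f x - fderiv ℝ f y‖ ≤ K * ‖x - y‖ :=
  convex_univ.norm_image_sub_le_of_norm_fderiv_le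
    (fun z _ => (hf.contDiff.fderiv_right (m := 1) le_rfl).differentiable one_ne_zero z)
    (fun z _ => hf.norm_fderiv_fderiv_le z) (Set.mem_univ y) (Set.mem_univ x)

lemma norm_firstOrderRemainder_sub_le (hf : C2HolderBound f β K) (hβ0 : 0 ≤ β) (hβ1 : β ≤ 1)
    {a b t T : ℝ} (ha : 0 ≤ a) (hb : 0 ≤ b) (ht : 0 ≤ t) (htT : t ≤ T) (hT : 1 ≤ T)
    {u v p q : E} (hp : ‖p‖ ≤ b) (hq : ‖q‖ ≤ b) (huv : ‖u - v‖ ≤ a * t) (hpq : ‖p - q‖ ≤ b * t) :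
    ‖firstOrderRemainder f u p - firstOrderRemainder f v q‖ ≤
      (8 + 2 * T) * K * max 1 (a ^ β) * b ^ 2 * t ^ β := by
  have hK : 0 ≤ K := (norm_nonneg _).trans (hf.norm_le 0)
  set M := max 1 (a ^ β)
  have hM1 : 1 ≤ M := le_max_left _ _
  have haM : a ^ β ≤ M := le_max_right _ _
  have hsum : (‖u - v‖ + ‖p - q‖) ^ β ≤ (a ^ β + b ^ β) * t ^ β :=
    rpow_add_le_of_le_mul (norm_nonneg _) (norm_nonneg _) ha hb ht huv hpq hβ0 hβ1
  have huvβ : ‖u - v‖ ^ β ≤ a ^ β * t ^ β := by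
    rw [← Real.mul_rpow ha ht]; exact Real.rpow_le_rpow (norm_nonneg _) huv hβ0
  have hpqβ : ‖p - q‖ ≤ b * T * t ^ β := by
    rw [mul_assoc]; exact hpq.trans (by gcongr; exact le_mul_rpow_of_le ht htT hT hβ0 hβ1)
  rcases le_total b 1 with hb1 | hb1
  · have hbβ : b ^ β ≤ 1 := Real.rpow_le_one hb hb1 hβ0
    refine (norm_firstOrderRemainder_sub_le_of_holder_fderiv_fderiv hf.contDiff hβ0
      hf.norm_fderiv_fderiv_le hf.norm_fderiv_fderiv_sub_le hp hq).trans ?_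
    calc K * b ^ 2 * (‖u - v‖ + ‖p - q‖) ^ β + 2 * K * b * ‖p - q‖
        ≤ K * b ^ 2 * ((a ^ β + b ^ β) * t ^ β) + 2 * K * b * (b * T * t ^ β) := by gcongr
      _ = K * b ^ 2 * t ^ β * (a ^ β + b ^ β + 2 * T) := by ring
      _ ≤ K * b ^ 2 * t ^ β * (M * (8 + 2 * T)) := by gcongr; nlinarith
      _ = (8 + 2 * T) * K * M * b ^ 2 * t ^ β := by ring
  · have hbβ : b ^ β ≤ b := Real.rpow_le_self_of_one_le hb1 hβ1
    refine (norm_firstOrderRemainder_sub_le_of_holder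
      (norm_sub_le_two_mul_rpow_of_lipschitz_of_bounded hβ0 hβ1 hf.norm_sub_le hf.norm_le)
      (norm_sub_le_two_mul_rpow_of_lipschitz_of_bounded hβ0 hβ1 hf.norm_fderiv_sub_le
        hf.norm_fderiv_le) hf.norm_fderiv_le hβ0 (by positivity) hp).trans ?_
    calc 2 * K * (‖u - v‖ + ‖p - q‖) ^ β + 2 * K * (1 + b) * ‖u - v‖ ^ β + K * ‖p - q‖
        ≤ 2 * K * ((a ^ β + b ^ β) * t ^ β) + 2 * K * (1 + b) * (a ^ β * t ^ β)
          + K * (b * T * t ^ β) := by gcongr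
      _ = K * t ^ β * (2 * (a ^ β + b ^ β) + 2 * (1 + b) * a ^ β + b * T) := by ring
      _ ≤ K * t ^ β * (M * b ^ 2 * (8 + 2 * T)) := by
          have hb2 : b ≤ b ^ 2 := by nlinarith
          have hMb : b ^ 2 ≤ M * b ^ 2 := le_mul_of_one_le_left (by positivity) hM1
          have ha' : a ^ β ≤ M * b ^ 2 := haM.trans (le_mul_of_one_le_right (by positivity)
            (by nlinarith))
          have hab : (1 + b) * a ^ β ≤ 2 * (M * b ^ 2) :=
            calc (1 + b) * a ^ β ≤ (2 * b ^ 2) * M :=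
                  mul_le_mul (by nlinarith) haM (Real.rpow_nonneg ha β) (by positivity)
              _ = 2 * (M * b ^ 2) := by ring
          have hbT : b * T ≤ M * b ^ 2 * T := by gcongr; exact hb2.trans hMb
          gcongr
          nlinarith [show 0 ≤ M * b ^ 2 * T by positivity]
      _ = (8 + 2 * T) * K * M * b ^ 2 * t ^ β := by ring

end C2HolderBound

section HolderNorms

variable {d : ℕ} {Ω : Set (Ed d)} {g : Ed d → ℝ}

lemma holderNormOn_nat_add (k : ℕ) {β : ℝ} (hβ0 : 0 < β) (hβ1 : β < 1) :
    holderNormOn (k + β) Ω g =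
      (∑ j ∈ Finset.range (k + 1), supDerivOn j Ω g) + holderSemiOn k β Ω g := by
  have hfloor : ⌊(k : ℝ) + β⌋₊ = k := by
    rw [Nat.floor_eq_iff (by positivity)]; constructor <;> linarith
  rw [holderNormOn, hfloor, if_neg (by linarith), add_sub_cancel_left]

lemma norm_iteratedFDerivWithin_le_of_supDerivOn_le {j : ℕ} {x : Ed d} (hx : x ∈ Ω)
    {M : ℝ≥0∞} (h : supDerivOn j Ω g ≤ M) (hM : M ≠ ⊤) :
    ‖iteratedFDerivWithin ℝ j g Ω x‖ ≤ M.toReal := by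
  have hle : (‖iteratedFDerivWithin ℝ j g Ω x‖₊ : ℝ≥0∞) ≤ M :=
    (le_iSup₂_of_le x hx le_rfl).trans h
  simpa using ENNReal.toReal_mono hM hle

lemma norm_iteratedFDerivWithin_sub_le_of_holderSemiOn_le {k : ℕ} {ε : ℝ} (hε : 0 ≤ ε)
    {x y : Ed d} (hx : x ∈ Ω) (hy : y ∈ Ω) {M : ℝ≥0∞} (h : holderSemiOn k ε Ω g ≤ M)
    (hM : M ≠ ⊤) :
    ‖iteratedFDerivWithin ℝ k g Ω x - iteratedFDerivWithin ℝ k g Ω y‖ ≤ M.toReal * ‖x - y‖ ^ ε := by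
  rcases eq_or_ne x y with rfl | hxy
  · simpa using mul_nonneg ENNReal.toReal_nonneg (Real.rpow_nonneg (norm_nonneg (x - x)) ε)
  have hpos : (‖x - y‖₊ : ℝ≥0∞) ^ ε ≠ 0 :=
    (ENNReal.rpow_pos (by simpa [sub_eq_zero] using hxy) ENNReal.coe_ne_top).ne'
  have hfin : (‖x - y‖₊ : ℝ≥0∞) ^ ε ≠ ⊤ := ENNReal.rpow_ne_top_of_nonneg hε ENNReal.coe_ne_top
  have hquot : (‖iteratedFDerivWithin ℝ k g Ω x - iteratedFDerivWithin ℝ k g Ω y‖₊ : ℝ≥0∞) /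
      (‖x - y‖₊ : ℝ≥0∞) ^ ε ≤ M := by
    refine le_trans ?_ h
    unfold holderSemiOn
    exact le_iSup₂_of_le x hx <| le_iSup₂_of_le y hy <| le_iSup_of_le hxy le_rfl
  rw [ENNReal.div_le_iff_le_mul (Or.inl hpos) (Or.inl hfin)] at hquot
  simpa [ENNReal.toReal_mul, ← ENNReal.toReal_rpow] using
    ENNReal.toReal_mono (ENNReal.mul_ne_top hM hfin) hquot

lemma supDerivOn_zero_le_ofReal {c : ℝ} (h : ∀ x ∈ Ω, ‖g x‖ ≤ c) :
    supDerivOn 0 Ω g ≤ ENNReal.ofReal c :=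
  iSup₂_le fun x hx => by
    rw [← enorm_eq_nnnorm, ← ofReal_norm, norm_iteratedFDerivWithin_zero]
    exact ENNReal.ofReal_le_ofReal (h x hx)

lemma holderSemiOn_zero_le_ofReal {ε c : ℝ} (hc : 0 ≤ c)
    (h : ∀ x ∈ Ω, ∀ y ∈ Ω, x ≠ y → ‖g x - g y‖ ≤ c * ‖x - y‖ ^ ε) :
    holderSemiOn 0 ε Ω g ≤ ENNReal.ofReal c := by
  refine iSup₂_le fun x hx => iSup₂_le fun y hy => iSup_le fun hxy => ?_
  have hpos : 0 < ‖x - y‖ := norm_sub_pos_iff.mpr hxy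
  have hdiff : ‖iteratedFDerivWithin ℝ 0 g Ω x - iteratedFDerivWithin ℝ 0 g Ω y‖ = ‖g x - g y‖ := by
    rw [iteratedFDerivWithin_zero_eq_comp, Function.comp_apply, Function.comp_apply,
      ← map_sub, LinearIsometryEquiv.norm_map]
  have hpos' : 0 < ‖x - y‖ ^ ε := Real.rpow_pos_of_pos hpos ε
  rw [← enorm_eq_nnnorm, ← ofReal_norm, hdiff, ← enorm_eq_nnnorm, ← ofReal_norm,
    ENNReal.ofReal_rpow_of_pos hpos, ENNReal.div_le_iff_le_mul (Or.inl (by simpa using hpos'))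
    (Or.inl ENNReal.ofReal_ne_top), ← ENNReal.ofReal_mul hc]
  exact ENNReal.ofReal_le_ofReal (h x hx y hy hxy)

lemma holderNormOn_le_ofReal_of_lt_one {β c c' : ℝ} (hβ0 : 0 < β) (hβ1 : β < 1) (hc : 0 ≤ c)
    (hc' : 0 ≤ c') (hbdd : ∀ x ∈ Ω, ‖g x‖ ≤ c)
    (hHolder : ∀ x ∈ Ω, ∀ y ∈ Ω, x ≠ y → ‖g x - g y‖ ≤ c' * ‖x - y‖ ^ β) :
    holderNormOn β Ω g ≤ ENNReal.ofReal (c + c') :=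
  calc holderNormOn β Ω g = supDerivOn 0 Ω g + holderSemiOn 0 β Ω g := by
        simpa using holderNormOn_nat_add 0 hβ0 hβ1
    _ ≤ ENNReal.ofReal c + ENNReal.ofReal c' :=
        add_le_add (supDerivOn_zero_le_ofReal hbdd) (holderSemiOn_zero_le_ofReal hc' hHolder)
    _ = ENNReal.ofReal (c + c') := (ENNReal.ofReal_add hc hc').symm

end HolderNorms

lemma ENNReal.ofReal_mul_toReal_mul_max_one_rpow_mul_sq {C β : ℝ} (hC : 0 ≤ C) (hβ : 0 ≤ β)
    {x y z : ℝ≥0∞} (hx : x ≠ ⊤) (hy : y ≠ ⊤) (hz : z ≠ ⊤) :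
    ENNReal.ofReal (C * x.toReal * max 1 (y.toReal ^ β) * z.toReal ^ 2) =
      ENNReal.ofReal C * x * max 1 (y ^ β) * z ^ 2 := by
  rw [ENNReal.ofReal_mul (by positivity), ENNReal.ofReal_mul (by positivity),
    ENNReal.ofReal_mul hC, ENNReal.ofReal_toReal hx, ENNReal.ofReal_max, ENNReal.ofReal_one,
    ← ENNReal.ofReal_rpow_of_nonneg ENNReal.toReal_nonneg hβ, ENNReal.ofReal_toReal hy,
    ENNReal.ofReal_pow ENNReal.toReal_nonneg, ENNReal.ofReal_toReal hz]

lemma C2HolderBound.of_holderNorm {d : ℕ} {f : Ed d → ℝ} {β : ℝ} (hf : ContDiff ℝ 2 f)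
    (hβ0 : 0 < β) (hβ1 : β < 1) (hF : holderNorm (2 + β) f ≠ ⊤) :
    C2HolderBound f β (holderNorm (2 + β) f).toReal := by
  have hsplit : holderNorm (2 + β) f = supDerivOn 0 Set.univ f + supDerivOn 1 Set.univ f +
      supDerivOn 2 Set.univ f + holderSemiOn 2 β Set.univ f := by
    simpa [holderNorm, Finset.sum_range_succ] using
      holderNormOn_nat_add (Ω := Set.univ) (g := f) 2 hβ0 hβ1
  have hderiv (j : ℕ) (hj : supDerivOn j Set.univ f ≤ holderNorm (2 + β) f) (x : Ed d) :
      ‖iteratedFDeriv ℝ j f x‖ ≤ (holderNorm (2 + β) f).toReal := by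
    simpa [iteratedFDerivWithin_univ] using
      norm_iteratedFDerivWithin_le_of_supDerivOn_le (Set.mem_univ x) hj hF
  refine ⟨hf, fun x => ?_, fun x => ?_, fun x => ?_, fun x y => ?_⟩
  · simpa using hderiv 0 (hsplit ▸ le_add_right (le_add_right (le_add_right le_rfl))) x
  · simpa using hderiv 1 (hsplit ▸ le_add_right (le_add_right (le_add_left le_rfl))) x
  · rw [← norm_iteratedFDeriv_one, norm_iteratedFDeriv_fderiv]
    exact hderiv 2 (hsplit ▸ le_add_right (le_add_left le_rfl)) x
  · rw [norm_fderiv_fderiv_sub_eq]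
    simpa [iteratedFDerivWithin_univ] using
      norm_iteratedFDerivWithin_sub_le_of_holderSemiOn_le hβ0.le (Set.mem_univ x)
        (Set.mem_univ y) (hsplit ▸ le_add_left le_rfl) hF

section C1Norm

variable {n m : ℕ} {Ω : Set (Ed n)} {A : Ed n → Ed m}

lemma norm_le_toReal_c1NormOn (hA : c1NormOn Ω A ≠ ⊤) {x : Ed n} (hx : x ∈ Ω) :
    ‖A x‖ ≤ (c1NormOn Ω A).toReal := by
  have hle : (‖A x‖₊ : ℝ≥0∞) ≤ c1NormOn Ω A := by
    unfold c1NormOn; exact le_add_right (le_iSup₂_of_le x hx le_rfl)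
  simpa using ENNReal.toReal_mono hA hle

lemma norm_fderivWithin_le_toReal_c1NormOn (hA : c1NormOn Ω A ≠ ⊤) {x : Ed n} (hx : x ∈ Ω) :
    ‖fderivWithin ℝ A Ω x‖ ≤ (c1NormOn Ω A).toReal := by
  have hle : (‖fderivWithin ℝ A Ω x‖₊ : ℝ≥0∞) ≤ c1NormOn Ω A := by
    unfold c1NormOn; exact le_add_left (le_iSup₂_of_le x hx le_rfl)
  simpa using ENNReal.toReal_mono hA hle

lemma norm_sub_le_toReal_c1NormOn_mul (hΩ : Convex ℝ Ω) (hdiff : DifferentiableOn ℝ A Ω)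
    (hA : c1NormOn Ω A ≠ ⊤) {x y : Ed n} (hx : x ∈ Ω) (hy : y ∈ Ω) :
    ‖A x - A y‖ ≤ (c1NormOn Ω A).toReal * ‖x - y‖ :=
  hΩ.norm_image_sub_le_of_norm_fderivWithin_le hdiff
    (fun _ hz => norm_fderivWithin_le_toReal_c1NormOn hA hz) hy hx

end C1Norm

lemma convex_unitCube (n : ℕ) : Convex ℝ (unitCube n) := fun _ hx _ hy _ _ ha hb hab i =>
  convex_Icc (0 : ℝ) 1 (hx i) (hy i) ha hb hab

lemma norm_sub_le_sqrt_of_mem_unitCube {n : ℕ} {x y : Ed n} (hx : x ∈ unitCube n)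
    (hy : y ∈ unitCube n) : ‖x - y‖ ≤ √n := by
  rw [EuclideanSpace.norm_eq]
  gcongr
  calc ∑ i, ‖(x - y) i‖ ^ 2 ≤ ∑ _i : Fin n, (1 : ℝ) := Finset.sum_le_sum fun i _ => by
        rw [PiLp.sub_apply, Real.norm_eq_abs, sq_abs]
        obtain ⟨hx0, hx1⟩ := hx i
        obtain ⟨hy0, hy1⟩ := hy i
        nlinarith
    _ = n := by simp

theorem taylor_remainder_holder_bound_general
    (n m : ℕ) (hn : 1 ≤ n) (β : ℝ) (hβ0 : 0 < β) (hβ1 : β < 1) :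
    ∃ C : ℝ, 0 < C ∧
      ∀ (f : Ed m → ℝ), ContDiff ℝ 2 f → holderNorm (2 + β) f ≠ ⊤ →
        ∀ (A B : Ed n → Ed m),
          ContDiffOn ℝ 1 A (unitCube n) → ContDiffOn ℝ 1 B (unitCube n) →
          c1NormOn (unitCube n) A ≠ ⊤ → c1NormOn (unitCube n) B ≠ ⊤ →
          holderNormOn β (unitCube n)
              (fun x => f (A x + B x) - f (A x) - ⟪gradient f (A x), B x⟫) ≤
            ENNReal.ofReal C * holderNorm (2 + β) f *
              max 1 (c1NormOn (unitCube n) A ^ β) * c1NormOn (unitCube n) B ^ 2 := by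
  refine ⟨9 + 2 * √n, by positivity, fun f hf hF A B hA hB hAfin hBfin => ?_⟩
  have hT : 1 ≤ √(n : ℝ) := Real.one_le_sqrt.mpr (by exact_mod_cast hn)
  have hfK := C2HolderBound.of_holderNorm hf hβ0 hβ1 hF
  set K := (holderNorm (2 + β) f).toReal
  set a := (c1NormOn (unitCube n) A).toReal
  set b := (c1NormOn (unitCube n) B).toReal
  have hBbdd : ∀ x ∈ unitCube n, ‖B x‖ ≤ b := fun x hx => norm_le_toReal_c1NormOn hBfin hx
  have hLip {D : Ed n → Ed m} (hD : ContDiffOn ℝ 1 D (unitCube n))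
      (hDfin : c1NormOn (unitCube n) D ≠ ⊤) {x y : Ed n} (hx : x ∈ unitCube n)
      (hy : y ∈ unitCube n) : ‖D x - D y‖ ≤ (c1NormOn (unitCube n) D).toReal * ‖x - y‖ :=
    norm_sub_le_toReal_c1NormOn_mul (convex_unitCube n) (hD.differentiableOn one_ne_zero)
      hDfin hx hy
  have hRbdd : ∀ x ∈ unitCube n, ‖firstOrderRemainder f (A x) (B x)‖ ≤ K * b ^ 2 := fun x hx =>
    (norm_firstOrderRemainder_le hfK.contDiff hfK.norm_fderiv_fderiv_le _ _).trans
      (by gcongr; exact hBbdd x hx)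
  simp_rw [inner_gradient_left]
  calc _ ≤ ENNReal.ofReal (K * b ^ 2 + (8 + 2 * √n) * K * max 1 (a ^ β) * b ^ 2) :=
        holderNormOn_le_ofReal_of_lt_one hβ0 hβ1 (by positivity) (by positivity) hRbdd
          (fun x hx y hy _ => hfK.norm_firstOrderRemainder_sub_le hβ0.le hβ1.le
            ENNReal.toReal_nonneg ENNReal.toReal_nonneg (norm_nonneg _)
            (norm_sub_le_sqrt_of_mem_unitCube hx hy) hT (hBbdd x hx) (hBbdd y hy)
            (hLip hA hAfin hx hy) (hLip hB hBfin hx hy))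
    _ ≤ ENNReal.ofReal ((9 + 2 * √n) * K * max 1 (a ^ β) * b ^ 2) :=
        ENNReal.ofReal_le_ofReal <| by
          nlinarith [le_max_left 1 (a ^ β), show 0 ≤ K * b ^ 2 by positivity]
    _ = _ := ENNReal.ofReal_mul_toReal_mul_max_one_rpow_mul_sq (by positivity) hβ0.le hF hAfin hBfin

/-- **Hölder norm of the first-order Taylor remainder along Hölder paths** (Lemma D.1). -/
theorem taylor_remainder_holder_bound
    (n m : ℕ) (hn : 1 ≤ n) (hm : 1 ≤ m) (β : ℝ) (hβ0 : 0 < β) (hβ1 : β < 1) :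
    ∃ C : ℝ, 0 < C ∧
      ∀ (f : Ed m → ℝ), ContDiff ℝ 2 f → holderNorm (2 + β) f ≠ ⊤ →
        ∀ (A B : Ed n → Ed m),
          ContDiffOn ℝ 1 A (unitCube n) → ContDiffOn ℝ 1 B (unitCube n) →
          c1NormOn (unitCube n) A ≠ ⊤ → c1NormOn (unitCube n) B ≠ ⊤ →
          holderNormOn β (unitCube n)
              (fun x => f (A x + B x) - f (A x) - ⟪gradient f (A x), B x⟫) ≤
            ENNReal.ofReal C * holderNorm (2 + β) f *
              max 1 (c1NormOn (unitCube n) A ^ β) * c1NormOn (unitCube n) B ^ 2 :=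
  taylor_remainder_holder_bound_general n m hn β hβ0 hβ1

end
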